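/- arXiv:math/0412478 — 2 statements merged into one kernel-verified Lean document; each statement's English description precedes it below -/
import Mathlib

section
/- Let Q be a supported quantale with support ς and unit e. Then every element a ≤ e satisfies a* = a and a a = a, and for all a, b ≤ e one has a b = a ∧ b (so the principal order ideal ↓e, which coincides with the image of ς, is a frame whose meet is the quantale multiplication). Moreover, for every right-sided element a (i.e. a 1 ≤ a) one has (ς a) 1 = a, and consequently for right-sided a, b: ς a ≤ ς b if and only if a ≤ b. -/
/-!
Below the unit the support axioms squeeze: for `a ≤ e` we get
`ς a ≤ a a* ≤ a e = a` and `a ≤ (ς a) a ≤ (ς a) e = ς a`, so `ς` fixes `↓e`. Then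
`a = ς a ≤ a a* ≤ e a* = a*` and the same for `a*` give `a* = a`, hence `a = ς a ≤ a a ≤ a`,
and idempotence together with monotonicity of the multiplication turns `a b` into `a ⊓ b`.
For right-sided `a`, `(ς a) 1 ≤ a a* 1 ≤ a 1 ≤ a ≤ (ς a) a ≤ (ς a) 1`, so `a ↦ a 1`
is a left inverse of `ς` on right-sided elements.
-/

theorem monotone_of_map_sSup {α β : Type*} [CompleteLattice α] [CompleteLattice β] {f : α → β}
    (hf : ∀ s : Set α, f (sSup s) = sSup (f '' s)) : Monotone f :=
  OrderHomClass.mono (sSupHom.mk f hf)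

theorem star_unit_eq {Q : Type*} {m : Q → Q → Q} {e : Q} {st : Q → Q}
    (hstst : ∀ a, st (st a) = a) (hstm : ∀ a b, st (m a b) = m (st b) (st a))
    (her : ∀ a, m a e = a) : st e = e := by
  have h := hstm (st e) e
  rwa [her, hstst, her, eq_comm] at h

section SupportedQuantale

variable {Q : Type*} [CompleteLattice Q] {m : Q → Q → Q} {e : Q} {st sp : Q → Q}

theorem support_eq_self_of_le_unit (hml : ∀ c, Monotone (m c)) (her : ∀ a, m a e = a)
    (hst : Monotone st) (hste : st e = e)
    (hsp2 : ∀ a, sp a ≤ m a (st a)) (hsp3 : ∀ a, a ≤ m (sp a) a) {a : Q} (ha : a ≤ e) :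
    sp a = a := by
  have hsta : st a ≤ e := hste ▸ hst ha
  apply le_antisymm
  · calc sp a ≤ m a (st a) := hsp2 a
      _ ≤ m a e := hml a hsta
      _ = a := her a
  · calc a ≤ m (sp a) a := hsp3 a
      _ ≤ m (sp a) e := hml _ ha
      _ = sp a := her _

theorem star_eq_self_of_le_unit (hmr : ∀ c, Monotone (fun a => m a c)) (hel : ∀ a, m e a = a)
    (hst : Monotone st) (hste : st e = e) (hstst : ∀ a, st (st a) = a)
    (hspfix : ∀ a, a ≤ e → sp a = a) (hsp2 : ∀ a, sp a ≤ m a (st a)) {a : Q} (ha : a ≤ e) :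
    st a = a := by
  have le_star : ∀ b, b ≤ e → b ≤ st b := fun b hb =>
    calc b = sp b := (hspfix b hb).symm
      _ ≤ m b (st b) := hsp2 b
      _ ≤ m e (st b) := hmr _ hb
      _ = st b := hel _
  refine le_antisymm ?_ (le_star a ha)
  simpa only [hstst] using le_star (st a) (hste ▸ hst ha)

theorem mul_self_of_le_unit (hml : ∀ c, Monotone (m c)) (her : ∀ a, m a e = a)
    (hspfix : ∀ a, a ≤ e → sp a = a) (hstfix : ∀ a, a ≤ e → st a = a)
    (hsp2 : ∀ a, sp a ≤ m a (st a)) {a : Q} (ha : a ≤ e) : m a a = a := by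
  apply le_antisymm
  · exact (hml a ha).trans (her a).le
  · calc a = sp a := (hspfix a ha).symm
      _ ≤ m a (st a) := hsp2 a
      _ = m a a := by rw [hstfix a ha]

theorem mul_eq_inf_of_le_unit (hml : ∀ c, Monotone (m c)) (hmr : ∀ c, Monotone (fun a => m a c))
    (hel : ∀ a, m e a = a) (her : ∀ a, m a e = a) (hidem : ∀ a, a ≤ e → m a a = a)
    {a b : Q} (ha : a ≤ e) (hb : b ≤ e) : m a b = a ⊓ b := by
  apply le_antisymm
  · exact le_inf ((hml a hb).trans (her a).le) ((hmr b ha).trans (hel b).le)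
  · calc a ⊓ b = m (a ⊓ b) (a ⊓ b) := (hidem _ (inf_le_left.trans ha)).symm
      _ ≤ m a (a ⊓ b) := hmr _ inf_le_left
      _ ≤ m a b := hml a inf_le_right

theorem inf_sSup_eq_of_le_unit (hdistl : ∀ (a : Q) (T : Set Q), m a (sSup T) = sSup (m a '' T))
    (hmeet : ∀ a b, a ≤ e → b ≤ e → m a b = a ⊓ b) {a : Q} (ha : a ≤ e) {T : Set Q}
    (hT : ∀ x ∈ T, x ≤ e) : a ⊓ sSup T = ⨆ b ∈ T, a ⊓ b := by
  calc a ⊓ sSup T = m a (sSup T) := (hmeet a _ ha (sSup_le hT)).symm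
    _ = ⨆ b ∈ T, m a b := by rw [hdistl, sSup_image]
    _ = ⨆ b ∈ T, a ⊓ b := iSup_congr fun b => iSup_congr fun hb => hmeet a b ha (hT b hb)

theorem support_mul_top_eq (hassoc : ∀ a b c, m (m a b) c = m a (m b c))
    (hml : ∀ c, Monotone (m c)) (hmr : ∀ c, Monotone (fun a => m a c))
    (hsp2 : ∀ a, sp a ≤ m a (st a)) (hsp3 : ∀ a, a ≤ m (sp a) a) {a : Q} (ha : m a ⊤ ≤ a) :
    m (sp a) ⊤ = a := by
  apply le_antisymm
  · calc m (sp a) ⊤ ≤ m (m a (st a)) ⊤ := hmr ⊤ (hsp2 a)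
      _ = m a (m (st a) ⊤) := hassoc a (st a) ⊤
      _ ≤ m a ⊤ := hml a le_top
      _ ≤ a := ha
  · exact (hsp3 a).trans (hml _ le_top)

theorem support_le_support_iff (hmr : ∀ c, Monotone (fun a => m a c)) (hsp : Monotone sp)
    {a b : Q} (ha : m (sp a) ⊤ = a) (hb : m (sp b) ⊤ = b) : sp a ≤ sp b ↔ a ≤ b := by
  refine ⟨fun h => ?_, fun h => hsp h⟩
  calc a = m (sp a) ⊤ := ha.symm
    _ ≤ m (sp b) ⊤ := hmr ⊤ h
    _ = b := hb

end SupportedQuantale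

/-- In a supported quantale, elements below the unit are self-adjoint
idempotents whose product is their meet, `↓e` is the image of the support and is a frame
with multiplication as meet, and on right-sided elements the support is an order embedding
split by `a ↦ a 1`. -/
theorem stmt_1 {Q : Type*} [CompleteLattice Q]
    (m : Q → Q → Q) (e : Q) (st : Q → Q) (sp : Q → Q)
    (hassoc : ∀ a b c : Q, m (m a b) c = m a (m b c))
    (hdistl : ∀ (a : Q) (T : Set Q), m a (sSup T) = sSup ((fun b => m a b) '' T))
    (hdistr : ∀ (b : Q) (T : Set Q), m (sSup T) b = sSup ((fun a => m a b) '' T))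
    (hel : ∀ a : Q, m e a = a) (her : ∀ a : Q, m a e = a)
    (hstsup : ∀ T : Set Q, st (sSup T) = sSup (st '' T))
    (hstst : ∀ a : Q, st (st a) = a)
    (hstm : ∀ a b : Q, st (m a b) = m (st b) (st a))
    (hspsup : ∀ T : Set Q, sp (sSup T) = sSup (sp '' T))
    (hsp1 : ∀ a : Q, sp a ≤ e)
    (hsp2 : ∀ a : Q, sp a ≤ m a (st a))
    (hsp3 : ∀ a : Q, a ≤ m (sp a) a) :
    (∀ a : Q, a ≤ e → st a = a ∧ m a a = a) ∧
    (∀ a b : Q, a ≤ e → b ≤ e → m a b = a ⊓ b) ∧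
    (∀ a : Q, a ≤ e ↔ ∃ b : Q, sp b = a) ∧
    (∀ a : Q, a ≤ e → ∀ T : Set Q, (∀ x ∈ T, x ≤ e) → a ⊓ sSup T = ⨆ b ∈ T, a ⊓ b) ∧
    (∀ a : Q, m a ⊤ ≤ a → m (sp a) ⊤ = a) ∧
    (∀ a b : Q, m a ⊤ ≤ a → m b ⊤ ≤ b → (sp a ≤ sp b ↔ a ≤ b)) := by
  have hml : ∀ c, Monotone (m c) := fun c => monotone_of_map_sSup (hdistl c)
  have hmr : ∀ c, Monotone (fun a => m a c) := fun c => monotone_of_map_sSup (hdistr c)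
  have hst : Monotone st := monotone_of_map_sSup hstsup
  have hste : st e = e := star_unit_eq hstst hstm her
  have hspfix : ∀ a, a ≤ e → sp a = a := fun a =>
    support_eq_self_of_le_unit hml her hst hste hsp2 hsp3
  have hstfix : ∀ a, a ≤ e → st a = a := fun a =>
    star_eq_self_of_le_unit hmr hel hst hste hstst hspfix hsp2
  have hidem : ∀ a, a ≤ e → m a a = a := fun a =>
    mul_self_of_le_unit hml her hspfix hstfix hsp2
  have hmeet : ∀ a b, a ≤ e → b ≤ e → m a b = a ⊓ b := fun a b =>
    mul_eq_inf_of_le_unit hml hmr hel her hidem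
  have hsptop : ∀ a, m a ⊤ ≤ a → m (sp a) ⊤ = a := fun a =>
    support_mul_top_eq hassoc hml hmr hsp2 hsp3
  refine ⟨fun a ha => ⟨hstfix a ha, hidem a ha⟩, hmeet,
    fun a => ⟨fun ha => ⟨a, hspfix a ha⟩, fun ⟨b, hb⟩ => hb ▸ hsp1 b⟩,
    fun a ha T hT => inf_sSup_eq_of_le_unit hdistl hmeet ha hT, hsptop,
    fun a b ha hb => support_le_support_iff hmr (monotone_of_map_sSup hspsup) (hsptop a ha)
      (hsptop b hb)⟩
end

section
/- Every abstract complete pseudogroup S is meet-complete: every nonempty subset X of S has an infimum with respect to the natural order. -/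
/-!
All lower bounds of `X` lie below one fixed element `x₀ ∈ X`, and elements with a common upper
bound are compatible. By completeness the lower bounds therefore have a join, and this join is
the meet of `X`: it lies below every element of `X`, each of which is an upper bound of the lower
bounds.
-/

/-- The natural order of an inverse semigroup: `x ≤ y` iff `x = f y` for some idempotent. -/
def InvNatLe {S : Type*} [Mul S] (x y : S) : Prop :=
  ∃ f : S, f * f = f ∧ x = f * y

/-- `z` is the join (least upper bound) of `X` with respect to the relation `le`. -/
def IsJoinRel {S : Type*} (le : S → S → Prop) (X : Set S) (z : S) : Prop :=
  (∀ x ∈ X, le x z) ∧ ∀ w : S, (∀ x ∈ X, le x w) → le z w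

/-- Two elements of an inverse semigroup are compatible if `s t⁻¹` and `s⁻¹ t` are
idempotent. -/
def InvCompatible {S : Type*} [Mul S] (inv : S → S) (s t : S) : Prop :=
  (s * inv t) * (s * inv t) = s * inv t ∧ (inv s * t) * (inv s * t) = inv s * t

structure IsInverseSemigroupInv {S : Type*} [Semigroup S] (inv : S → S) : Prop where
  mul_inv_mul : ∀ x, x * inv x * x = x
  inv_mul_inv : ∀ x, inv x * x * inv x = inv x
  eq_inv_of : ∀ x y, x * y * x = x → y * x * y = y → y = inv x

namespace IsInverseSemigroupInv

variable {S : Type*} [Semigroup S] {inv : S → S} (h : IsInverseSemigroupInv inv)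
include h

theorem inv_inv (x : S) : inv (inv x) = x :=
  (h.eq_inv_of _ _ (h.inv_mul_inv x) (h.mul_inv_mul x)).symm

theorem inv_eq_self_of_isIdempotentElem {e : S} (he : IsIdempotentElem e) : inv e = e :=
  (h.eq_inv_of e e (by rw [he.eq, he.eq]) (by rw [he.eq, he.eq])).symm

theorem isIdempotentElem_mul_inv (x : S) : IsIdempotentElem (x * inv x) := by
  rw [IsIdempotentElem, ← mul_assoc, h.mul_inv_mul]

/-- With `y = (e f)⁻¹`, uniqueness of inverses gives `f y e = y`, which
forces `y` to be idempotent, hence self-inverse, hence equal to `e f`. -/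
theorem isIdempotentElem_mul {e f : S} (he : IsIdempotentElem e) (hf : IsIdempotentElem f) :
    IsIdempotentElem (e * f) := by
  set y := inv (e * f)
  have hy : f * y * e = y := by
    refine h.eq_inv_of _ _ ?_ ?_
    · calc e * f * (f * y * e) * (e * f) = e * (f * f) * y * (e * e) * f := by
            simp only [mul_assoc]
        _ = e * f * y * (e * f) := by rw [hf.eq, he.eq]; simp only [mul_assoc]
        _ = e * f := h.mul_inv_mul _
    · calc f * y * e * (e * f) * (f * y * e) = f * (y * (e * e * (f * f)) * y) * e := by
            simp only [mul_assoc]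
        _ = f * y * e := by rw [he.eq, hf.eq, h.inv_mul_inv]
  have hyy : IsIdempotentElem y := by
    calc y * y = f * y * e * (f * y * e) := by rw [hy]
      _ = f * (y * (e * f) * y) * e := by simp only [mul_assoc]
      _ = y := by rw [h.inv_mul_inv, hy]
  have hef : e * f = y := by
    rw [← h.inv_eq_self_of_isIdempotentElem hyy, h.inv_inv]
  exact hef ▸ hyy

theorem commute_of_isIdempotentElem {e f : S} (he : IsIdempotentElem e)
    (hf : IsIdempotentElem f) : Commute e f := by
  have swap_inv : ∀ a b : S, IsIdempotentElem a → IsIdempotentElem b →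
      a * b * (b * a) * (a * b) = a * b := fun a b ha hb => by
    calc a * b * (b * a) * (a * b) = a * (b * b) * (a * a) * b := by simp only [mul_assoc]
      _ = a * b * (a * b) := by rw [ha.eq, hb.eq]; simp only [mul_assoc]
      _ = a * b := (h.isIdempotentElem_mul ha hb).eq
  have hfe : f * e = inv (e * f) := h.eq_inv_of _ _ (swap_inv e f he hf) (swap_inv f e hf he)
  rw [Commute, SemiconjBy, hfe, h.inv_eq_self_of_isIdempotentElem (h.isIdempotentElem_mul he hf)]

theorem inv_mul (a b : S) : inv (a * b) = inv b * inv a := by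
  have hcomm : ∀ x y : S, Commute (x * inv x) (inv y * y) := fun x y =>
    h.commute_of_isIdempotentElem (h.isIdempotentElem_mul_inv x)
      (by simpa only [h.inv_inv] using h.isIdempotentElem_mul_inv (inv y))
  refine (h.eq_inv_of _ _ ?_ ?_).symm
  · calc a * b * (inv b * inv a) * (a * b) = a * (b * inv b * (inv a * a)) * b := by
          simp only [mul_assoc]
      _ = a * inv a * a * (b * inv b * b) := by rw [(hcomm b a).eq]; simp only [mul_assoc]
      _ = a * b := by rw [h.mul_inv_mul, h.mul_inv_mul]
  · calc inv b * inv a * (a * b) * (inv b * inv a) = inv b * (inv a * a * (b * inv b)) * inv a := by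
          simp only [mul_assoc]
      _ = inv b * b * inv b * (inv a * a * inv a) := by
          rw [← (hcomm b a).eq]; simp only [mul_assoc]
      _ = inv b * inv a := by rw [h.inv_mul_inv, h.inv_mul_inv]

theorem isIdempotentElem_inv_mul_mul {g : S} (hg : IsIdempotentElem g) (x : S) :
    IsIdempotentElem (inv x * g * x) := by
  calc inv x * g * x * (inv x * g * x) = inv x * (g * (x * inv x)) * g * x := by
        simp only [mul_assoc]
    _ = inv x * x * inv x * (g * g) * x := by
        rw [(h.commute_of_isIdempotentElem hg (h.isIdempotentElem_mul_inv x)).eq]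
        simp only [mul_assoc]
    _ = inv x * g * x := by rw [h.inv_mul_inv, hg.eq]

theorem invCompatible_of_invNatLe {s t x : S} (hs : InvNatLe s x) (ht : InvNatLe t x) :
    InvCompatible inv s t := by
  obtain ⟨e, he, rfl⟩ := hs
  obtain ⟨f, hf, rfl⟩ := ht
  constructor
  · have hst : e * x * inv (f * x) = e * (x * inv x) * f := by
      rw [h.inv_mul, h.inv_eq_self_of_isIdempotentElem hf]; simp only [mul_assoc]
    rw [hst]
    exact h.isIdempotentElem_mul (h.isIdempotentElem_mul he (h.isIdempotentElem_mul_inv x)) hf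
  · have hst : inv (e * x) * (f * x) = inv x * (e * f) * x := by
      rw [h.inv_mul, h.inv_eq_self_of_isIdempotentElem he]; simp only [mul_assoc]
    rw [hst]
    exact h.isIdempotentElem_inv_mul_mul (h.isIdempotentElem_mul he hf) x

end IsInverseSemigroupInv

theorem stmt_13_general {S : Type*} [Semigroup S] (inv : S → S)
    (hinv1 : ∀ x : S, x * inv x * x = x)
    (hinv2 : ∀ x : S, inv x * x * inv x = inv x)
    (hinvuniq : ∀ x y : S, x * y * x = x → y * x * y = y → y = inv x)
    -- completeness: every compatible subset has a join
    (hcomplete : ∀ X : Set S, (∀ s ∈ X, ∀ t ∈ X, InvCompatible inv s t) →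
      ∃ z : S, IsJoinRel InvNatLe X z) :
    ∀ X : Set S, X.Nonempty →
      ∃ z : S, (∀ x ∈ X, InvNatLe z x) ∧
        ∀ w : S, (∀ x ∈ X, InvNatLe w x) → InvNatLe w z := by
  intro X ⟨x₀, hx₀⟩
  have h : IsInverseSemigroupInv inv := ⟨hinv1, hinv2, hinvuniq⟩
  obtain ⟨z, hle_z, hz_le⟩ := hcomplete {w | ∀ x ∈ X, InvNatLe w x} fun s hs t ht =>
    h.invCompatible_of_invNatLe (hs x₀ hx₀) (ht x₀ hx₀)
  exact ⟨z, fun x hx => hz_le x fun w hw => hw x hx, hle_z⟩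

/-- every abstract complete pseudogroup is meet-complete: every nonempty
subset has an infimum in the natural order (Proposition `prop:abspg`-2). -/
theorem stmt_13 {S : Type*} [Semigroup S] (inv : S → S)
    (hinv1 : ∀ x : S, x * inv x * x = x)
    (hinv2 : ∀ x : S, inv x * x * inv x = inv x)
    (hinvuniq : ∀ x y : S, x * y * x = x → y * x * y = y → y = inv x)
    -- completeness: every compatible subset has a join
    (hcomplete : ∀ X : Set S, (∀ s ∈ X, ∀ t ∈ X, InvCompatible inv s t) →
      ∃ z : S, IsJoinRel InvNatLe X z)
    -- infinite distributivity
    (hdist : ∀ (s : S) (X : Set S) (z : S), IsJoinRel InvNatLe X z →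
      IsJoinRel InvNatLe ((fun x => s * x) '' X) (s * z) ∧
      IsJoinRel InvNatLe ((fun x => x * s) '' X) (z * s)) :
    ∀ X : Set S, X.Nonempty →
      ∃ z : S, (∀ x ∈ X, InvNatLe z x) ∧
        ∀ w : S, (∀ x ∈ X, InvNatLe w x) → InvNatLe w z :=
  stmt_13_general inv hinv1 hinv2 hinvuniq hcomplete
end
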